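/- arXiv:2502.04006 — 3 statements merged into one kernel-verified Lean document; each statement's English description precedes it below -/
import Mathlib

section
/- Let K₁ and K₂ be closed convex cones in a finite-dimensional real inner product space and let K = K₁ ∩ K₂. If every chain of faces of K₁ has length at most l₁ and every chain of faces of K₂ has length at most l₂, then every chain of faces of K has length at most l₁ + l₂ − 1. -/
open Matrix
open scoped Pointwise

noncomputable section

/-- Frobenius inner product on real `n × n` matrices:
`⟨A,B⟩ = ∑ᵢⱼ Aᵢⱼ Bᵢⱼ`. -/
def mip {n : ℕ} (A B : Matrix (Fin n) (Fin n) ℝ) : ℝ :=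
  ∑ i, ∑ j, A i j * B i j

/-- `CPset S` (also used for `S₊(X)` when `S` is a subspace): the set of matrices of the
form `∑ᵢ aᵢaᵢᵀ` for a positive number of vectors `aᵢ ∈ S`. -/
def CPset {n : ℕ} (S : Set (Fin n → ℝ)) : Set (Matrix (Fin n) (Fin n) ℝ) :=
  {A | ∃ k : ℕ, 0 < k ∧ ∃ f : Fin k → (Fin n → ℝ),
        (∀ i, f i ∈ S) ∧ A = ∑ i, Matrix.vecMulVec (f i) (f i)}

/-- `COPset K`: symmetric matrices `A` with `xᵀAx ≥ 0` for all `x ∈ K`. -/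
def COPset {n : ℕ} (K : Set (Fin n → ℝ)) : Set (Matrix (Fin n) (Fin n) ℝ) :=
  {A | A.IsSymm ∧ ∀ x ∈ K, 0 ≤ x ⬝ᵥ A.mulVec x}

/-- `F` is a face of the convex cone `C`: a nonempty convex subcone such that
`a, b ∈ C`, `a + b ∈ F` imply `a, b ∈ F`. -/
def IsFaceOf {M : Type*} [AddCommMonoid M] [Module ℝ M] (C F : Set M) : Prop :=
  F.Nonempty ∧ F ⊆ C ∧ Convex ℝ F ∧ (∀ x ∈ F, ∀ c : ℝ, 0 ≤ c → c • x ∈ F) ∧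
    ∀ a ∈ C, ∀ b ∈ C, a + b ∈ F → a ∈ F ∧ b ∈ F

/-- Exposed face of a cone of matrices (w.r.t. the trace inner product). -/
def IsExposedFaceOf {n : ℕ} (C F : Set (Matrix (Fin n) (Fin n) ℝ)) : Prop :=
  IsFaceOf C F ∧ ∃ H : Matrix (Fin n) (Fin n) ℝ,
    (∀ A ∈ C, 0 ≤ mip H A) ∧ F = {A ∈ C | mip H A = 0}

/-- Dimension of a set: dimension of its linear span. -/
def setDim {M : Type*} [AddCommGroup M] [Module ℝ M] (S : Set M) : ℕ :=
  Module.finrank ℝ (Submodule.span ℝ S)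

/-- The ray `ℝ₊ • x`. -/
def rayOf {M : Type*} [AddCommMonoid M] [Module ℝ M] (x : M) : Set M :=
  {y | ∃ c : ℝ, 0 ≤ c ∧ y = c • x}

/-- An extreme ray: a one-dimensional face. -/
def IsExtremeRayOf {M : Type*} [AddCommGroup M] [Module ℝ M] (C F : Set M) : Prop :=
  IsFaceOf C F ∧ setDim F = 1

/-- The second-order cone `L^{m+1} = {x : x₀ ≥ ‖(x₁,…,xₘ)‖}`. -/
def soc (m : ℕ) : Set (Fin (m+1) → ℝ) :=
  {x | Real.sqrt (∑ i : Fin m, x i.succ ^ 2) ≤ x 0}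

/-- The boundary `∂L^{m+1} = {x : x₀ = ‖(x₁,…,xₘ)‖}`. -/
def socBd (m : ℕ) : Set (Fin (m+1) → ℝ) :=
  {x | Real.sqrt (∑ i : Fin m, x i.succ ^ 2) = x 0}

/-- The interior `int L^{m+1} = {x : x₀ > ‖(x₁,…,xₘ)‖}`. -/
def socInt (m : ℕ) : Set (Fin (m+1) → ℝ) :=
  {x | Real.sqrt (∑ i : Fin m, x i.succ ^ 2) < x 0}

/-- The matrix `J = diag(1, −1, …, −1)`. -/
def Jmat (m : ℕ) : Matrix (Fin (m+1)) (Fin (m+1)) ℝ :=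
  Matrix.diagonal fun i => if i = 0 then 1 else -1

/-- The hyperplane `{x : x ⬝ u = 0}` as a submodule. -/
def perpHyp {n : ℕ} (u : Fin n → ℝ) : Submodule ℝ (Fin n → ℝ) where
  carrier := {x | x ⬝ᵥ u = 0}
  add_mem' := by
    intro a b ha hb
    simp only [Set.mem_setOf_eq, add_dotProduct] at *
    linarith
  zero_mem' := by simp [zero_dotProduct]
  smul_mem' := by
    intro c a ha
    simp only [Set.mem_setOf_eq, smul_dotProduct] at *
    simp [ha]

/-- A polyhedral cone: nonnegative combinations of finitely many vectors. -/
def IsPolyhedralCone {M : Type*} [AddCommMonoid M] [Module ℝ M] (S : Set M) : Prop :=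
  ∃ (k : ℕ) (g : Fin k → M),
    S = {x | ∃ c : Fin k → ℝ, (∀ i, 0 ≤ c i) ∧ x = ∑ i, c i • g i}

end

/-!
Along a chain `F₁ ⊊ ⋯ ⊊ F_l` of faces of `K = K₁ ∩ K₂`, take the partial sums `sᵢ ∈ Fᵢ` of points
`yᵢ ∈ Fᵢ₊₁ \ Fᵢ`. The minimal face of `K` at a point is the intersection of the minimal faces of
`K₁` and of `K₂` there, and it lies in every face containing the point; since `sᵢ₊₁ ∉ Fᵢ`, the
pairs (minimal face of `K₁` at `sᵢ`, minimal face of `K₂` at `sᵢ`) strictly increase. Along a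
strictly increasing chain in a product of posets the sum of the heights of the two coordinates
grows by at least one per step, and here it is at most `(l₁ - 1) + (l₂ - 1)`.
-/

section ChainBound

variable {α β : Type*} [Preorder α] [Preorder β]

namespace Order

lemma height_add_one_le_of_forall_strictMono_le {a : ℕ}
    (ha : ∀ (l : ℕ) (f : Fin l → α), StrictMono f → l ≤ a) (x : α) :
    height x + 1 ≤ a := by
  obtain _ | a := a
  · exact absurd (ha 1 (fun _ => x) (Subsingleton.strictMono _)) (by omega)
  have : height x ≤ a := height_le fun p _ => by
    exact_mod_cast Nat.le_of_succ_le_succ (ha _ p.toFun p.strictMono)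
  push_cast
  gcongr

lemma height_add_height_add_one_le_of_lt {x y : α × β} (h : x < y) :
    height x.1 + height x.2 + 1 ≤ height y.1 + height y.2 := by
  rcases Prod.lt_iff.mp h with ⟨h1, h2⟩ | ⟨h1, h2⟩
  · rw [add_right_comm]
    exact add_le_add (height_add_one_le h1) (height_mono h2)
  · rw [add_assoc]
    exact add_le_add (height_mono h1) (height_add_one_le h2)

end Order

open Order

lemma length_le_of_strictMono_prod {a b : ℕ}
    (ha : ∀ (l : ℕ) (f : Fin l → α), StrictMono f → l ≤ a)
    (hb : ∀ (l : ℕ) (f : Fin l → β), StrictMono f → l ≤ b)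
    {l : ℕ} (f : Fin l → α × β) (hf : StrictMono f) : l ≤ a + b - 1 := by
  obtain _ | n := l
  · omega
  have hheight (i : Fin (n + 1)) : (i : ℕ∞) ≤ height (f i).1 + height (f i).2 := by
    induction i using Fin.induction with
    | zero => simp
    | succ i ih =>
      calc ((i.succ : ℕ) : ℕ∞) = (i.castSucc : ℕ) + 1 := by simp
        _ ≤ _ := by gcongr
        _ ≤ _ := height_add_height_add_one_le_of_lt (hf i.castSucc_lt_succ)
  have hlast : ((n + 2 : ℕ) : ℕ∞) ≤ a + b := calc
    ((n + 2 : ℕ) : ℕ∞) = (Fin.last n : ℕ) + 1 + 1 := by simp; ring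
    _ ≤ height (f (Fin.last n)).1 + height (f (Fin.last n)).2 + 1 + 1 := by
      gcongr; exact hheight _
    _ = (height (f (Fin.last n)).1 + 1) + (height (f (Fin.last n)).2 + 1) := by ring
    _ ≤ a + b := add_le_add (height_add_one_le_of_forall_strictMono_le ha _)
        (height_add_one_le_of_forall_strictMono_le hb _)
  norm_cast at hlast
  omega

lemma length_le_of_strictMono_prod_of_forall {P : α → Prop} {Q : β → Prop} {a b : ℕ}
    (ha : ∀ (l : ℕ) (f : Fin l → α), StrictMono f → (∀ i, P (f i)) → l ≤ a)
    (hb : ∀ (l : ℕ) (f : Fin l → β), StrictMono f → (∀ i, Q (f i)) → l ≤ b)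
    {l : ℕ} (f : Fin l → α × β) (hf : StrictMono f) (hP : ∀ i, P (f i).1)
    (hQ : ∀ i, Q (f i).2) : l ≤ a + b - 1 :=
  length_le_of_strictMono_prod (α := {x // P x}) (β := {y // Q y})
    (fun l g hg => ha l (Subtype.val ∘ g) ((Subtype.strictMono_coe _).comp hg) fun i => (g i).2)
    (fun l g hg => hb l (Subtype.val ∘ g) ((Subtype.strictMono_coe _).comp hg) fun i => (g i).2)
    (fun i => (⟨(f i).1, hP i⟩, ⟨(f i).2, hQ i⟩)) fun _ _ h => hf h

end ChainBound

section MinimalFace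

variable {E : Type*} [AddCommGroup E] [Module ℝ E] {C K₁ K₂ F : Set E} {x y : E}

def IsConvexCone (C : Set E) : Prop :=
  Convex ℝ C ∧ ∀ x ∈ C, ∀ c : ℝ, 0 ≤ c → c • x ∈ C

lemma IsConvexCone.inter (h₁ : IsConvexCone K₁) (h₂ : IsConvexCone K₂) :
    IsConvexCone (K₁ ∩ K₂) :=
  ⟨h₁.1.inter h₂.1, fun x hx c hc => ⟨h₁.2 x hx.1 c hc, h₂.2 x hx.2 c hc⟩⟩

lemma IsFaceOf.isConvexCone (hF : IsFaceOf C F) : IsConvexCone F :=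
  ⟨hF.2.2.1, hF.2.2.2.1⟩

lemma IsConvexCone.smul_mem (hC : IsConvexCone C) (hx : x ∈ C) {c : ℝ} (hc : 0 ≤ c) :
    c • x ∈ C :=
  hC.2 x hx c hc

lemma IsConvexCone.zero_mem (hC : IsConvexCone C) (hx : x ∈ C) : (0 : E) ∈ C := by
  simpa using hC.smul_mem hx le_rfl

lemma IsConvexCone.add_mem (hC : IsConvexCone C) (hx : x ∈ C) (hy : y ∈ C) : x + y ∈ C := by
  have hmid := hC.1 hx hy (by norm_num : (0 : ℝ) ≤ 1 / 2) (by norm_num : (0 : ℝ) ≤ 1 / 2)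
    (by norm_num)
  convert hC.smul_mem hmid zero_le_two using 1
  module

/-- The smallest face of `C` containing `x ∈ C`. -/
def minFace (C : Set E) (x : E) : Set E :=
  {y | y ∈ C ∧ ∃ t : ℝ, 0 < t ∧ x - t • y ∈ C}

lemma IsConvexCone.sub_smul_mem_of_le (hC : IsConvexCone C) (hy : y ∈ C) {s t : ℝ}
    (hst : s ≤ t) (ht : x - t • y ∈ C) : x - s • y ∈ C := by
  convert hC.add_mem ht (hC.smul_mem hy (sub_nonneg.2 hst)) using 1
  module

lemma mem_minFace_self (hC : IsConvexCone C) (hx : x ∈ C) : x ∈ minFace C x :=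
  ⟨hx, 1, one_pos, by simpa using hC.zero_mem hx⟩

lemma isFaceOf_minFace (hC : IsConvexCone C) (hx : x ∈ C) : IsFaceOf C (minFace C x) := by
  refine ⟨⟨x, mem_minFace_self hC hx⟩, fun y hy => hy.1, ?convex, ?cone, ?extreme⟩
  case convex =>
    rintro y ⟨hy, s, hs, hxy⟩ z ⟨hz, t, ht, hxz⟩ a b ha hb hab
    refine ⟨hC.1 hy hz ha hb hab, min s t, lt_min hs ht, ?_⟩
    convert hC.1 (hC.sub_smul_mem_of_le hy (min_le_left s t) hxy)
      (hC.sub_smul_mem_of_le hz (min_le_right s t) hxz) ha hb hab using 1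
    conv_lhs => rw [← one_smul ℝ x, ← hab]
    module
  case cone =>
    rintro y ⟨hy, t, ht, hxy⟩ c hc
    rcases hc.eq_or_lt with rfl | hc
    · rw [zero_smul]
      exact ⟨hC.zero_mem hx, 1, one_pos, by simpa using hx⟩
    · refine ⟨hC.smul_mem hy hc.le, t / c, div_pos ht hc, ?_⟩
      rwa [smul_smul, div_mul_cancel₀ _ hc.ne']
  case extreme =>
    rintro a ha b hb ⟨-, t, ht, hxab⟩
    refine ⟨⟨ha, t, ht, ?_⟩, hb, t, ht, ?_⟩
    · convert hC.add_mem hxab (hC.smul_mem hb ht.le) using 1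
      module
    · convert hC.add_mem hxab (hC.smul_mem ha ht.le) using 1
      module

lemma IsFaceOf.minFace_subset (hC : IsConvexCone C) (hF : IsFaceOf C F) (hx : x ∈ F) :
    minFace C x ⊆ F := by
  rintro y ⟨hy, t, ht, hxy⟩
  have hty : t • y ∈ F := (hF.2.2.2.2 _ hxy _ (hC.smul_mem hy ht.le) (by simpa using hx)).2
  simpa [smul_smul, ht.ne'] using hF.2.2.2.1 _ hty t⁻¹ (inv_nonneg.2 ht.le)

lemma minFace_subset_minFace_add (hC : IsConvexCone C) {v : E} (hv : v ∈ C) :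
    minFace C x ⊆ minFace C (x + v) := by
  rintro y ⟨hy, t, ht, hxy⟩
  refine ⟨hy, t, ht, ?_⟩
  convert hC.add_mem hxy hv using 1
  abel

lemma minFace_inter_subset (h₁ : IsConvexCone K₁) (h₂ : IsConvexCone K₂) :
    minFace K₁ x ∩ minFace K₂ x ⊆ minFace (K₁ ∩ K₂) x := by
  rintro y ⟨⟨hy₁, s, hs, hxy₁⟩, hy₂, t, ht, hxy₂⟩
  exact ⟨⟨hy₁, hy₂⟩, min s t, lt_min hs ht, h₁.sub_smul_mem_of_le hy₁ (min_le_left s t) hxy₁,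
    h₂.sub_smul_mem_of_le hy₂ (min_le_right s t) hxy₂⟩

lemma minFace_prod_lt_minFace_prod_add (h₁ : IsConvexCone K₁) (h₂ : IsConvexCone K₂) {s v : E}
    (hs : s ∈ K₁ ∩ K₂) (hv : v ∈ K₁ ∩ K₂) (hsv : s + v ∉ minFace (K₁ ∩ K₂) s) :
    (minFace K₁ s, minFace K₂ s) < (minFace K₁ (s + v), minFace K₂ (s + v)) := by
  refine lt_of_le_of_ne ⟨minFace_subset_minFace_add h₁ hv.1, minFace_subset_minFace_add h₂ hv.2⟩
    fun heq => hsv (minFace_inter_subset h₁ h₂ ?_)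
  obtain ⟨heq₁, heq₂⟩ := Prod.mk.inj heq
  rw [heq₁, heq₂]
  exact ⟨mem_minFace_self h₁ (h₁.add_mem hs.1 hv.1), mem_minFace_self h₂ (h₂.add_mem hs.2 hv.2)⟩

lemma exists_strictMono_faces_prod_of_faces_inter (h₁ : IsConvexCone K₁)
    (h₂ : IsConvexCone K₂) {l : ℕ} (F : Fin l → Set E) (hF : StrictMono F)
    (hface : ∀ i, IsFaceOf (K₁ ∩ K₂) (F i)) :
    ∃ G : Fin l → Set E × Set E, StrictMono G ∧ ∀ i, IsFaceOf K₁ (G i).1 ∧ IsFaceOf K₂ (G i).2 := by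
  obtain _ | n := l
  · exact ⟨fun i => i.elim0, fun i => i.elim0, fun i => i.elim0⟩
  have hK := h₁.inter h₂
  rw [Fin.strictMono_iff_lt_succ] at hF
  choose y hy hyF using fun i => Set.exists_of_ssubset (hF i)
  set s := Fin.partialSum y
  have hs_succ (i : Fin n) : s i.succ = s i.castSucc + y i := Fin.partialSum_succ y i
  have hs (i : Fin (n + 1)) : s i ∈ F i := by
    induction i using Fin.induction with
    | zero => simpa [s] using (hface 0).isConvexCone.zero_mem (hface 0).1.some_mem
    | succ i ih =>
      rw [hs_succ]
      exact (hface _).isConvexCone.add_mem ((hF i).le ih) (hy i)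
  have hsK (i : Fin (n + 1)) : s i ∈ K₁ ∩ K₂ := (hface i).2.1 (hs i)
  refine ⟨fun i => (minFace K₁ (s i), minFace K₂ (s i)), Fin.strictMono_iff_lt_succ.2 fun i => ?_,
    fun i => ⟨isFaceOf_minFace h₁ (hsK i).1, isFaceOf_minFace h₂ (hsK i).2⟩⟩
  have hyK : y i ∈ K₁ ∩ K₂ := (hface _).2.1 (hy i)
  rw [hs_succ]
  refine minFace_prod_lt_minFace_prod_add h₁ h₂ (hsK _) hyK fun hmem => hyF i ?_
  exact ((hface _).2.2.2.2 _ (hsK _) _ hyK ((hface _).minFace_subset hK (hs _) hmem)).2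

end MinimalFace

theorem stmt14_general {E : Type*} [NormedAddCommGroup E] [InnerProductSpace ℝ E]
    (K1 K2 : Set E) (hK1conv : Convex ℝ K1)
    (hK1cone : ∀ x ∈ K1, ∀ c : ℝ, 0 ≤ c → c • x ∈ K1)
    (hK2conv : Convex ℝ K2)
    (hK2cone : ∀ x ∈ K2, ∀ c : ℝ, 0 ≤ c → c • x ∈ K2)
    (l1 l2 : ℕ)
    (hl1 : ∀ (l : ℕ) (F : Fin l → Set E),
        StrictMono F → (∀ i, IsFaceOf K1 (F i)) → l ≤ l1)
    (hl2 : ∀ (l : ℕ) (F : Fin l → Set E),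
        StrictMono F → (∀ i, IsFaceOf K2 (F i)) → l ≤ l2) :
    ∀ (l : ℕ) (F : Fin l → Set E),
      StrictMono F → (∀ i, IsFaceOf (K1 ∩ K2) (F i)) → l ≤ l1 + l2 - 1 := by
  intro l F hF hface
  obtain ⟨G, hG, hGface⟩ := exists_strictMono_faces_prod_of_faces_inter
    ⟨hK1conv, hK1cone⟩ ⟨hK2conv, hK2cone⟩ F hF hface
  exact length_le_of_strictMono_prod_of_forall hl1 hl2 G hG (fun i => (hGface i).1)
    fun i => (hGface i).2

/-- chains of faces of an intersection of two closed convex cones: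
`ℓ_{K₁ ∩ K₂} ≤ ℓ_{K₁} + ℓ_{K₂} − 1`. -/
theorem stmt14 {E : Type*} [NormedAddCommGroup E] [InnerProductSpace ℝ E]
    [FiniteDimensional ℝ E]
    (K1 K2 : Set E) (hK1cl : IsClosed K1) (hK1conv : Convex ℝ K1)
    (hK1cone : ∀ x ∈ K1, ∀ c : ℝ, 0 ≤ c → c • x ∈ K1)
    (hK2cl : IsClosed K2) (hK2conv : Convex ℝ K2)
    (hK2cone : ∀ x ∈ K2, ∀ c : ℝ, 0 ≤ c → c • x ∈ K2)
    (l1 l2 : ℕ)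
    (hl1 : ∀ (l : ℕ) (F : Fin l → Set E),
        StrictMono F → (∀ i, IsFaceOf K1 (F i)) → l ≤ l1)
    (hl2 : ∀ (l : ℕ) (F : Fin l → Set E),
        StrictMono F → (∀ i, IsFaceOf K2 (F i)) → l ≤ l2) :
    ∀ (l : ℕ) (F : Fin l → Set E),
      StrictMono F → (∀ i, IsFaceOf (K1 ∩ K2) (F i)) → l ≤ l1 + l2 - 1 :=
  stmt14_general K1 K2 hK1conv hK1cone hK2conv hK2cone l1 l2 hl1 hl2
end

section
/- For n ≥ 2, the length of a longest chain of faces of CP(Lⁿ) equals n + 2; that is, there exists a chain F_{n+2} ⊊ ⋯ ⊊ F₁ of faces of CP(Lⁿ), and every chain F_l ⊊ ⋯ ⊊ F₁ of faces of CP(Lⁿ) satisfies l ≤ n + 2. -/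
open Matrix
open scoped Pointwise

/-!
Upper bound. A face `F` of `CP(L)` is `CP(K_F)` for `K_F = {x ∈ L | x xᵀ ∈ F}`. By the
Sturm–Zhang description `CP(L) = {A ⪰ 0 | ⟨J, A⟩ ≥ 0}`, a vector `y ∈ L` lies in `K_F` as soon
as it lies in the span of `K_F` and either `y` is on the boundary of `L` or `F` contains some `A`
with `⟨J, A⟩ > 0`: a matrix of `F` then dominates `y yᵀ` with enough room in the `J`-direction,
so `y yᵀ` splits off it inside `CP(L)`. Hence `F` is determined by `span K_F` and that bit, so
`dim span K_F + [∃ A ∈ F, ⟨J, A⟩ > 0]` strictly increases along a chain of faces; it takes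
values in `{0, …, n + 1}`.

Lower bound. Cutting `CP(L)` successively by the supporting hyperplanes `⟨J, A⟩ = 0`,
`A_ll = 0` for `l = n - 1, …, 2`, `(e₀ + e₁)ᵀ A (e₀ + e₁) = 0` and `A₀₀ = 0` gives `n + 2`
nested faces; the rank-one matrices `x xᵀ` with `x = e₀`, `e₀ + e_l`, `e₀ - e₁` show that each
cut is proper.
-/

noncomputable section

section FrobeniusPairing

variable {n : ℕ}

lemma mip_add (H A B : Matrix (Fin n) (Fin n) ℝ) : mip H (A + B) = mip H A + mip H B := by
  simp only [mip, Matrix.add_apply, mul_add, Finset.sum_add_distrib]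

lemma mip_smul (H : Matrix (Fin n) (Fin n) ℝ) (c : ℝ) (A : Matrix (Fin n) (Fin n) ℝ) :
    mip H (c • A) = c * mip H A := by
  simp only [mip, Matrix.smul_apply, smul_eq_mul, Finset.mul_sum, mul_left_comm]

def mipLinear (H : Matrix (Fin n) (Fin n) ℝ) : Matrix (Fin n) (Fin n) ℝ →ₗ[ℝ] ℝ where
  toFun := mip H
  map_add' := mip_add H
  map_smul' := mip_smul H

lemma mip_sub (H A B : Matrix (Fin n) (Fin n) ℝ) : mip H (A - B) = mip H A - mip H B :=
  map_sub (mipLinear H) A B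

lemma mip_sum {ι : Type*} (H : Matrix (Fin n) (Fin n) ℝ) (s : Finset ι)
    (A : ι → Matrix (Fin n) (Fin n) ℝ) : mip H (∑ i ∈ s, A i) = ∑ i ∈ s, mip H (A i) :=
  map_sum (mipLinear H) A s

lemma mip_vecMulVec (H : Matrix (Fin n) (Fin n) ℝ) (x : Fin n → ℝ) :
    mip H (vecMulVec x x) = x ⬝ᵥ H *ᵥ x := by
  simp only [mip, vecMulVec_apply, dotProduct, mulVec, Finset.mul_sum]
  exact Finset.sum_congr rfl fun i _ => Finset.sum_congr rfl fun j _ => by ring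

lemma dotProduct_vecMulVec_mulVec (x v : Fin n → ℝ) :
    v ⬝ᵥ vecMulVec x x *ᵥ v = (x ⬝ᵥ v) ^ 2 := by
  rw [vecMulVec_mulVec]
  simp [sq, dotProduct_comm v x]

end FrobeniusPairing

namespace IsFaceOf

variable {M : Type*} [AddCommMonoid M] [Module ℝ M] {C F : Set M}

lemma subset (hF : IsFaceOf C F) : F ⊆ C := hF.2.1

lemma convex (hF : IsFaceOf C F) : Convex ℝ F := hF.2.2.1

lemma smul_mem (hF : IsFaceOf C F) {x : M} (hx : x ∈ F) {c : ℝ} (hc : 0 ≤ c) : c • x ∈ F :=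
  hF.2.2.2.1 x hx c hc

lemma mem_of_add_mem (hF : IsFaceOf C F) {a b : M} (ha : a ∈ C) (hb : b ∈ C)
    (hab : a + b ∈ F) : a ∈ F ∧ b ∈ F :=
  hF.2.2.2.2 a ha b hb hab

lemma zero_mem (hF : IsFaceOf C F) : (0 : M) ∈ F := by
  obtain ⟨x, hx⟩ := hF.1
  simpa using hF.smul_mem hx le_rfl

lemma add_mem (hF : IsFaceOf C F) {a b : M} (ha : a ∈ F) (hb : b ∈ F) : a + b ∈ F := by
  have hmid := hF.convex ha hb (by norm_num : (0 : ℝ) ≤ 1 / 2) (by norm_num : (0 : ℝ) ≤ 1 / 2)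
    (by norm_num)
  simpa [← smul_add, smul_smul] using hF.smul_mem hmid (by norm_num : (0 : ℝ) ≤ 2)

lemma sum_mem (hF : IsFaceOf C F) {ι : Type*} {s : Finset ι} {a : ι → M}
    (ha : ∀ i ∈ s, a i ∈ F) : ∑ i ∈ s, a i ∈ F :=
  Finset.sum_induction a (· ∈ F) (fun _ _ => hF.add_mem) hF.zero_mem ha

lemma mem_of_sum_mem (hF : IsFaceOf C F) (hC : ∀ a ∈ C, ∀ b ∈ C, a + b ∈ C) {ι : Type*}
    {s : Finset ι} {a : ι → M} (ha : ∀ i ∈ s, a i ∈ C) (hs : ∑ i ∈ s, a i ∈ F) :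
    ∀ i ∈ s, a i ∈ F := by
  classical
  intro i hi
  have hrest : ∑ j ∈ s.erase i, a j ∈ C :=
    Finset.sum_induction a (· ∈ C) (fun a b ha hb => hC a ha b hb)
      (hF.subset hF.zero_mem) fun j hj => ha j (Finset.mem_of_mem_erase hj)
  rw [← Finset.add_sum_erase s a hi] at hs
  exact (hF.mem_of_add_mem (ha i hi) hrest hs).1

end IsFaceOf

theorem isFaceOf_setOf_forall_eq_zero {M : Type*} [AddCommMonoid M] [Module ℝ M] {C : Set M}
    (hC : IsFaceOf C C) {ι : Type*} (φ : ι → M →ₗ[ℝ] ℝ) (hφ : ∀ i, ∀ x ∈ C, 0 ≤ φ i x)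
    (p : ι → Prop) : IsFaceOf C {x ∈ C | ∀ i, p i → φ i x = 0} := by
  refine ⟨⟨0, hC.zero_mem, fun i _ => map_zero _⟩, fun x hx => hx.1, ?_, ?_, ?_⟩
  · intro x hx y hy a b ha hb hab
    refine ⟨hC.convex hx.1 hy.1 ha hb hab, fun i hi => ?_⟩
    simp [hx.2 i hi, hy.2 i hi]
  · intro x hx c hc
    exact ⟨hC.smul_mem hx.1 hc, fun i hi => by simp [hx.2 i hi]⟩
  · intro a ha b hb hab
    have hsum (i) (hi : p i) : φ i a + φ i b = 0 := by rw [← map_add]; exact hab.2 i hi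
    exact ⟨⟨ha, fun i hi => by linarith [hsum i hi, hφ i a ha, hφ i b hb]⟩,
      ⟨hb, fun i hi => by linarith [hsum i hi, hφ i a ha, hφ i b hb]⟩⟩

namespace CPset

variable {n : ℕ} {K : Set (Fin n → ℝ)} {A B : Matrix (Fin n) (Fin n) ℝ}

lemma vecMulVec_mem {x : Fin n → ℝ} (hx : x ∈ K) : vecMulVec x x ∈ CPset K :=
  ⟨1, one_pos, fun _ => x, fun _ => hx, by simp⟩

lemma zero_mem (h0 : (0 : Fin n → ℝ) ∈ K) : (0 : Matrix (Fin n) (Fin n) ℝ) ∈ CPset K := by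
  simpa using vecMulVec_mem h0

lemma add_mem (hA : A ∈ CPset K) (hB : B ∈ CPset K) : A + B ∈ CPset K := by
  obtain ⟨k, hk, f, hf, rfl⟩ := hA
  obtain ⟨l, -, g, hg, rfl⟩ := hB
  refine ⟨k + l, by omega, Fin.append f g,
    Fin.addCases (by simpa using hf) (by simpa using hg), by simp [Fin.sum_univ_add]⟩

lemma sum_mem (h0 : (0 : Fin n → ℝ) ∈ K) {ι : Type*} {s : Finset ι}
    {A : ι → Matrix (Fin n) (Fin n) ℝ} (hA : ∀ i ∈ s, A i ∈ CPset K) :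
    ∑ i ∈ s, A i ∈ CPset K :=
  Finset.sum_induction A (· ∈ CPset K) (fun _ _ => add_mem) (zero_mem h0) hA

lemma smul_mem (hK : ∀ x ∈ K, ∀ c : ℝ, 0 ≤ c → c • x ∈ K) (hA : A ∈ CPset K) {c : ℝ}
    (hc : 0 ≤ c) : c • A ∈ CPset K := by
  obtain ⟨k, hk, f, hf, rfl⟩ := hA
  refine ⟨k, hk, fun i => √c • f i, fun i => hK _ (hf i) _ (Real.sqrt_nonneg c), ?_⟩
  simp only [Finset.smul_sum, vecMulVec_smul, smul_vecMulVec, smul_smul, ← sq,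
    Real.sq_sqrt hc]

lemma posSemidef (hA : A ∈ CPset K) : A.PosSemidef := by
  obtain ⟨k, -, f, -, rfl⟩ := hA
  simpa using Matrix.posSemidef_iff_eq_sum_vecMulVec.2 ⟨k, f, rfl⟩

lemma mip_nonneg {H : Matrix (Fin n) (Fin n) ℝ} (hH : ∀ x ∈ K, 0 ≤ x ⬝ᵥ H *ᵥ x)
    (hA : A ∈ CPset K) : 0 ≤ mip H A := by
  obtain ⟨k, -, f, hf, rfl⟩ := hA
  rw [mip_sum]
  exact Finset.sum_nonneg fun i _ => by rw [mip_vecMulVec]; exact hH _ (hf i)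

lemma mono_of_forall_mem_or_neg_mem {S : Set (Fin n → ℝ)} (h : ∀ x ∈ S, x ∈ K ∨ -x ∈ K) :
    CPset S ⊆ CPset K := by
  rintro _ ⟨k, hk, f, hf, rfl⟩
  choose g hgK hg using fun i => show ∃ y ∈ K, vecMulVec y y = vecMulVec (f i) (f i) from
    (h _ (hf i)).elim (fun hx => ⟨_, hx, rfl⟩) (fun hx => ⟨_, hx, by simp⟩)
  exact ⟨k, hk, g, hgK, by simp [hg]⟩

lemma isFaceOf_self (h0 : (0 : Fin n → ℝ) ∈ K)
    (hK : ∀ x ∈ K, ∀ c : ℝ, 0 ≤ c → c • x ∈ K) :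
    IsFaceOf (CPset K) (CPset K) :=
  ⟨⟨0, zero_mem h0⟩, subset_rfl, fun _ hA _ hB _ _ ha hb _ =>
    add_mem (smul_mem hK hA ha) (smul_mem hK hB hb), fun _ hA _ hc => smul_mem hK hA hc,
    fun _ ha _ hb _ => ⟨ha, hb⟩⟩

end CPset

def faceGenerators {n : ℕ} (K : Set (Fin n → ℝ)) (F : Set (Matrix (Fin n) (Fin n) ℝ)) :
    Set (Fin n → ℝ) :=
  {x | x ∈ K ∧ vecMulVec x x ∈ F}

theorem IsFaceOf.eq_CPset_faceGenerators {n : ℕ} {K : Set (Fin n → ℝ)}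
    {F : Set (Matrix (Fin n) (Fin n) ℝ)} (hF : IsFaceOf (CPset K) F) :
    F = CPset (faceGenerators K F) := by
  ext A
  refine ⟨fun hA => ?_, fun ⟨k, _, f, hf, hA⟩ => hA ▸ hF.sum_mem fun i _ => (hf i).2⟩
  obtain ⟨k, hk, f, hf, rfl⟩ := hF.subset hA
  refine ⟨k, hk, f, fun i => ⟨hf i, ?_⟩, rfl⟩
  exact hF.mem_of_sum_mem (fun _ ha _ hb => CPset.add_mem ha hb)
    (fun i _ => CPset.vecMulVec_mem (hf i)) hA i (Finset.mem_univ i)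

section QuadraticDecomposition

variable {n : ℕ} (H : Matrix (Fin n) (Fin n) ℝ)

lemma exists_vecMulVec_add_eq_of_nonpos_of_pos {a b : Fin n → ℝ} (ha : a ⬝ᵥ H *ᵥ a ≤ 0)
    (hb : 0 < b ⬝ᵥ H *ᵥ b) :
    ∃ u v : Fin n → ℝ, vecMulVec u u + vecMulVec v v = vecMulVec a a + vecMulVec b b ∧
      u ⬝ᵥ H *ᵥ u = 0 := by
  set qa := a ⬝ᵥ H *ᵥ a
  set qb := b ⬝ᵥ H *ᵥ b
  set β := a ⬝ᵥ H *ᵥ b + b ⬝ᵥ H *ᵥ a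
  have hexpand (t : ℝ) : (a + t • b) ⬝ᵥ H *ᵥ (a + t • b) = qb * (t * t) + β * t + qa := by
    simp only [qa, qb, β, mulVec_add, mulVec_smul, dotProduct_add, add_dotProduct,
      dotProduct_smul, smul_dotProduct, smul_eq_mul]
    ring
  obtain ⟨t, ht⟩ : ∃ t : ℝ, (a + t • b) ⬝ᵥ H *ᵥ (a + t • b) = 0 := by
    simp only [hexpand]
    refine exists_quadratic_eq_zero hb.ne' ⟨√(discrim qb β qa), ?_⟩
    rw [Real.mul_self_sqrt (by rw [discrim]; nlinarith [sq_nonneg β])]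
  -- `(u, v) = c • (a + t • b, b - t • a)` is a rotation of `(a, b)`, so `u uᵀ + v vᵀ = a aᵀ + b bᵀ`
  set c := (√(1 + t ^ 2))⁻¹
  have hc : c ^ 2 * (1 + t ^ 2) = 1 := by
    rw [inv_pow, Real.sq_sqrt (by positivity), inv_mul_cancel₀ (by positivity)]
  refine ⟨c • (a + t • b), c • (b - t • a), ?_, ?_⟩
  · ext i j
    simp only [Matrix.add_apply, vecMulVec_apply, Pi.add_apply, Pi.sub_apply, Pi.smul_apply,
      smul_eq_mul]
    linear_combination (a i * a j + b i * b j) * hc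
  · rw [mulVec_smul, smul_dotProduct, dotProduct_smul, ht, smul_zero, smul_zero]

theorem sum_vecMulVec_mem_CPset {ι : Type*} (s : Finset ι) (f : ι → Fin n → ℝ)
    (hs : 0 ≤ mip H (∑ i ∈ s, vecMulVec (f i) (f i))) :
    ∑ i ∈ s, vecMulVec (f i) (f i) ∈ CPset {x | 0 ≤ x ⬝ᵥ H *ᵥ x} := by
  classical
  induction s using Finset.strongInduction generalizing f with
  | H s ih =>
  have h0 : (0 : Fin n → ℝ) ∈ {x | 0 ≤ x ⬝ᵥ H *ᵥ x} := by simp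
  by_cases hall : ∀ i ∈ s, 0 ≤ f i ⬝ᵥ H *ᵥ f i
  · exact CPset.sum_mem h0 fun i hi => CPset.vecMulVec_mem (hall i hi)
  push Not at hall
  obtain ⟨i, hi, hneg⟩ := hall
  obtain ⟨j, hj, hpos⟩ : ∃ j ∈ s, 0 < f j ⬝ᵥ H *ᵥ f j := by
    by_contra! hnonpos
    have : ∑ k ∈ s, f k ⬝ᵥ H *ᵥ f k < ∑ k ∈ s, (0 : ℝ) :=
      Finset.sum_lt_sum hnonpos ⟨i, hi, hneg⟩
    simp only [mip_sum, mip_vecMulVec, Finset.sum_const_zero] at hs this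
    linarith
  have hij : j ∈ s.erase i := Finset.mem_erase.2 ⟨fun h => by subst h; linarith, hj⟩
  obtain ⟨u, v, huv, hu⟩ := exists_vecMulVec_add_eq_of_nonpos_of_pos H hneg.le hpos
  obtain ⟨g, hgj, hg⟩ : ∃ g : ι → Fin n → ℝ, g j = v ∧ ∀ k ≠ j, g k = f k :=
    ⟨Function.update f j v, Function.update_self .., fun k hk => Function.update_of_ne hk ..⟩
  -- replace the pair `(f i, f j)` by `(u, v)`, then set `u` aside
  have hsplit : ∑ k ∈ s, vecMulVec (f k) (f k) =
      vecMulVec u u + ∑ k ∈ s.erase i, vecMulVec (g k) (g k) := by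
    have hrest : ∑ k ∈ (s.erase i).erase j, vecMulVec (g k) (g k) =
        ∑ k ∈ (s.erase i).erase j, vecMulVec (f k) (f k) :=
      Finset.sum_congr rfl fun k hk => by rw [hg k (Finset.ne_of_mem_erase hk)]
    rw [← Finset.add_sum_erase _ _ hi, ← Finset.add_sum_erase _ _ hij,
      ← Finset.add_sum_erase (s.erase i) _ hij, hrest, hgj, ← add_assoc, ← add_assoc, huv]
  rw [hsplit] at hs ⊢
  rw [mip_add, mip_vecMulVec, hu, zero_add] at hs
  exact CPset.add_mem (CPset.vecMulVec_mem hu.ge) (ih _ (Finset.erase_ssubset hi) g hs)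

theorem mem_CPset_of_posSemidef {A : Matrix (Fin n) (Fin n) ℝ} (hA : A.PosSemidef)
    (hHA : 0 ≤ mip H A) : A ∈ CPset {x | 0 ≤ x ⬝ᵥ H *ᵥ x} := by
  obtain ⟨k, f, rfl⟩ := Matrix.posSemidef_iff_eq_sum_vecMulVec.1 hA
  simp only [star_trivial] at hHA ⊢
  exact sum_vecMulVec_mem_CPset H _ f hHA

end QuadraticDecomposition

section SecondOrderCone

variable {m : ℕ}

lemma dotProduct_Jmat_mulVec (x : Fin (m + 1) → ℝ) :
    x ⬝ᵥ Jmat m *ᵥ x = x 0 ^ 2 - ∑ i : Fin m, x i.succ ^ 2 := by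
  simp [Jmat, mulVec_diagonal, dotProduct, Fin.sum_univ_succ, sq]
  ring

lemma mem_soc_iff {x : Fin (m + 1) → ℝ} : x ∈ soc m ↔ 0 ≤ x 0 ∧ 0 ≤ x ⬝ᵥ Jmat m *ᵥ x := by
  rw [dotProduct_Jmat_mulVec, sub_nonneg]
  exact Real.sqrt_le_iff

lemma zero_mem_soc : (0 : Fin (m + 1) → ℝ) ∈ soc m := by
  simp [mem_soc_iff]

lemma smul_mem_soc {x : Fin (m + 1) → ℝ} (hx : x ∈ soc m) {c : ℝ} (hc : 0 ≤ c) :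
    c • x ∈ soc m := by
  rw [mem_soc_iff] at hx ⊢
  simp only [mulVec_smul, smul_dotProduct, dotProduct_smul, smul_eq_mul, Pi.smul_apply]
  exact ⟨mul_nonneg hc hx.1, mul_nonneg hc (mul_nonneg hc hx.2)⟩

lemma isFaceOf_CPset_soc_self : IsFaceOf (CPset (soc m)) (CPset (soc m)) :=
  CPset.isFaceOf_self zero_mem_soc fun _ hx _ hc => smul_mem_soc hx hc

lemma mip_Jmat_nonneg {A : Matrix (Fin (m + 1)) (Fin (m + 1)) ℝ} (hA : A ∈ CPset (soc m)) :
    0 ≤ mip (Jmat m) A :=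
  CPset.mip_nonneg (fun _ hx => (mem_soc_iff.1 hx).2) hA

theorem mem_CPset_soc_of_posSemidef {A : Matrix (Fin (m + 1)) (Fin (m + 1)) ℝ}
    (hA : A.PosSemidef) (hJ : 0 ≤ mip (Jmat m) A) : A ∈ CPset (soc m) := by
  refine CPset.mono_of_forall_mem_or_neg_mem (fun x hx => ?_)
    (mem_CPset_of_posSemidef _ hA hJ)
  have hx : 0 ≤ x ⬝ᵥ Jmat m *ᵥ x := hx
  rcases le_total 0 (x 0) with h | h
  · exact .inl (mem_soc_iff.2 ⟨h, hx⟩)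
  · refine .inr (mem_soc_iff.2 ⟨by simpa using h, ?_⟩)
    rwa [mulVec_neg, neg_dotProduct, dotProduct_neg, neg_neg]

end SecondOrderCone

lemma exists_posSemidef_smul_sum_sub_vecMulVec {n : ℕ} {S : Set (Fin n → ℝ)}
    {y : Fin n → ℝ} (hy : y ∈ Submodule.span ℝ S) :
    ∃ (k : ℕ) (g : Fin k → Fin n → ℝ), (∀ i, g i ∈ S) ∧ ∃ c : ℝ, 0 ≤ c ∧
      (c • ∑ i, vecMulVec (g i) (g i) - vecMulVec y y).PosSemidef := by
  obtain ⟨k, a, g, rfl⟩ := Submodule.mem_span_set'.1 hy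
  refine ⟨k, fun i => g i, fun i => (g i).2, ∑ i, a i ^ 2, by positivity,
    .of_dotProduct_mulVec_nonneg ?_ fun v => ?_⟩
  · ext i j
    simp [vecMulVec_apply, Matrix.sum_apply, mul_comm]
  · simp only [star_trivial, sub_mulVec, dotProduct_sub, smul_mulVec, dotProduct_smul,
      sum_mulVec, dotProduct_sum, dotProduct_vecMulVec_mulVec, smul_eq_mul, sub_nonneg]
    -- Cauchy–Schwarz
    simpa [sum_dotProduct] using
      Finset.sum_mul_sq_le_sq_mul_sq Finset.univ a fun i => g i ⬝ᵥ v

section FaceHeight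

variable {m : ℕ} {F G : Set (Matrix (Fin (m + 1)) (Fin (m + 1)) ℝ)}

theorem IsFaceOf.mem_faceGenerators_soc (hF : IsFaceOf (CPset (soc m)) F)
    {y : Fin (m + 1) → ℝ} (hy : y ∈ soc m) (hspan : y ∈ Submodule.span ℝ (faceGenerators (soc m) F))
    (htime : (∃ A ∈ F, 0 < mip (Jmat m) A) ∨ y ⬝ᵥ Jmat m *ᵥ y = 0) :
    y ∈ faceGenerators (soc m) F := by
  obtain ⟨k, g, hg, c, hc, hpsd⟩ := exists_posSemidef_smul_sum_sub_vecMulVec hspan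
  have hA : c • ∑ i, vecMulVec (g i) (g i) ∈ F :=
    hF.smul_mem (hF.sum_mem fun i _ => (hg i).2) hc
  obtain ⟨B, hBF, hB⟩ : ∃ B ∈ F, y ⬝ᵥ Jmat m *ᵥ y ≤ mip (Jmat m) B := by
    rcases htime with ⟨A₀, hA₀, hpos⟩ | hnull
    · refine ⟨(y ⬝ᵥ Jmat m *ᵥ y / mip (Jmat m) A₀) • A₀,
        hF.smul_mem hA₀ (div_nonneg (mem_soc_iff.1 hy).2 hpos.le), ?_⟩
      rw [mip_smul, div_mul_cancel₀ _ hpos.ne']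
    · exact ⟨0, hF.zero_mem, by simp [hnull, mip]⟩
  -- `y yᵀ` splits off the matrix `c • ∑ gᵢ gᵢᵀ + B` of `F` inside `CP(L)`
  have hrest : c • ∑ i, vecMulVec (g i) (g i) + B - vecMulVec y y ∈ CPset (soc m) := by
    refine mem_CPset_soc_of_posSemidef ?_ ?_
    · rw [add_sub_right_comm]
      exact hpsd.add (CPset.posSemidef (hF.subset hBF))
    · rw [mip_sub, mip_add, mip_vecMulVec]
      linarith [mip_Jmat_nonneg (hF.subset hA)]
  refine ⟨hy, (hF.mem_of_add_mem hrest (CPset.vecMulVec_mem hy) ?_).2⟩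
  rw [sub_add_cancel]
  exact hF.add_mem hA hBF

theorem IsFaceOf.mem_faceGenerators_soc_iff (hF : IsFaceOf (CPset (soc m)) F)
    {y : Fin (m + 1) → ℝ} :
    y ∈ faceGenerators (soc m) F ↔ y ∈ soc m ∧
      y ∈ Submodule.span ℝ (faceGenerators (soc m) F) ∧
      ((∃ A ∈ F, 0 < mip (Jmat m) A) ∨ y ⬝ᵥ Jmat m *ᵥ y = 0) := by
  refine ⟨fun hy => ⟨hy.1, Submodule.subset_span hy, ?_⟩,
    fun ⟨hy, hspan, htime⟩ => hF.mem_faceGenerators_soc hy hspan htime⟩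
  refine or_iff_not_imp_left.2 fun hnot => le_antisymm ?_ (mem_soc_iff.1 hy.1).2
  rw [← mip_vecMulVec]
  push Not at hnot
  exact hnot _ hy.2

theorem IsFaceOf.eq_of_span_faceGenerators_eq (hF : IsFaceOf (CPset (soc m)) F)
    (hG : IsFaceOf (CPset (soc m)) G)
    (hspan : Submodule.span ℝ (faceGenerators (soc m) F) =
      Submodule.span ℝ (faceGenerators (soc m) G))
    (htime : (∃ A ∈ F, 0 < mip (Jmat m) A) ↔ ∃ A ∈ G, 0 < mip (Jmat m) A) : F = G := by
  rw [hF.eq_CPset_faceGenerators, hG.eq_CPset_faceGenerators]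
  congr 1
  ext y
  rw [hF.mem_faceGenerators_soc_iff, hG.mem_faceGenerators_soc_iff, hspan, htime]

open Classical in
def faceHeight (m : ℕ) (F : Set (Matrix (Fin (m + 1)) (Fin (m + 1)) ℝ)) : ℕ :=
  Module.finrank ℝ (Submodule.span ℝ (faceGenerators (soc m) F)) +
    if ∃ A ∈ F, 0 < mip (Jmat m) A then 1 else 0

theorem faceHeight_lt (hF : IsFaceOf (CPset (soc m)) F) (hG : IsFaceOf (CPset (soc m)) G)
    (hFG : F ⊂ G) : faceHeight m F < faceHeight m G := by
  have hspan : Submodule.span ℝ (faceGenerators (soc m) F) ≤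
      Submodule.span ℝ (faceGenerators (soc m) G) :=
    Submodule.span_mono fun x hx => ⟨hx.1, hFG.subset hx.2⟩
  have htime : (∃ A ∈ F, 0 < mip (Jmat m) A) → ∃ A ∈ G, 0 < mip (Jmat m) A :=
    fun ⟨A, hA, hpos⟩ => ⟨A, hFG.subset hA, hpos⟩
  have hrank (hiff : (∃ A ∈ F, 0 < mip (Jmat m) A) ↔ ∃ A ∈ G, 0 < mip (Jmat m) A) :
      Module.finrank ℝ (Submodule.span ℝ (faceGenerators (soc m) F)) <
        Module.finrank ℝ (Submodule.span ℝ (faceGenerators (soc m) G)) :=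
    Submodule.finrank_lt_finrank_of_lt <| hspan.lt_of_ne fun heq =>
      hFG.ne (hF.eq_of_span_faceGenerators_eq hG heq hiff)
  unfold faceHeight
  by_cases hGt : ∃ A ∈ G, 0 < mip (Jmat m) A
  · by_cases hFt : ∃ A ∈ F, 0 < mip (Jmat m) A
    · simpa [hFt, hGt] using hrank (iff_of_true hFt hGt)
    · simpa [hFt, hGt, Nat.lt_succ_iff] using Submodule.finrank_mono hspan
  · have hFt : ¬∃ A ∈ F, 0 < mip (Jmat m) A := mt htime hGt
    simpa [hFt, hGt] using hrank (iff_of_false hFt hGt)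

theorem faceHeight_le (F : Set (Matrix (Fin (m + 1)) (Fin (m + 1)) ℝ)) :
    faceHeight m F ≤ m + 2 := by
  have := (Submodule.span ℝ (faceGenerators (soc m) F)).finrank_le
  rw [Module.finrank_fin_fun] at this
  unfold faceHeight
  split_ifs <;> omega

end FaceHeight

section Chain

variable {m : ℕ}

def cutVec (m : ℕ) (j : Fin (m + 2)) : Fin (m + 2) → ℝ :=
  Pi.single j 1 + if j = 1 then Pi.single 0 1 else 0

def nullVec (m : ℕ) (j : Fin (m + 2)) : Fin (m + 2) → ℝ :=
  Pi.single 0 1 + if j = 0 then Pi.single 1 (-1) else Pi.single j 1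

lemma cutVec_dotProduct_nullVec_of_lt {i j : Fin (m + 2)} (h : i < j) :
    cutVec m j ⬝ᵥ nullVec m i = 0 := by
  have hj0 : j ≠ 0 := Fin.ne_zero_of_lt h
  by_cases hi : i = 0
  · subst hi
    by_cases hj1 : j = 1 <;> simp [cutVec, nullVec, hj0, hj1, dotProduct_add]
  · have hj1 : j ≠ 1 := by
      rintro rfl
      exact hi (Fin.ext (by simpa [Fin.lt_def] using h))
    simp [cutVec, nullVec, hi, hj0, hj1, h.ne', dotProduct_add]

lemma cutVec_dotProduct_nullVec_self (j : Fin (m + 2)) : cutVec m j ⬝ᵥ nullVec m j ≠ 0 := by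
  by_cases h0 : j = 0 <;> by_cases h1 : j = 1 <;>
    simp [cutVec, nullVec, h0, h1, dotProduct_add]

lemma dotProduct_Jmat_nullVec (j : Fin (m + 2)) :
    nullVec m j ⬝ᵥ Jmat (m + 1) *ᵥ nullVec m j = 0 := by
  obtain ⟨k, s, hs, hv⟩ : ∃ (k : Fin (m + 1)) (s : ℝ), s ^ 2 = 1 ∧
      nullVec m j = Pi.single 0 1 + Pi.single k.succ s := by
    by_cases hj : j = 0
    · exact ⟨0, -1, by norm_num, by simp [nullVec, hj]⟩
    · obtain ⟨k, rfl⟩ := Fin.exists_succ_eq.2 hj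
      exact ⟨k, 1, by norm_num, by simp [nullVec, hj]⟩
  rw [hv, dotProduct_Jmat_mulVec]
  simp [Pi.single_apply, Fin.succ_ne_zero, hs]

lemma nullVec_mem_soc (j : Fin (m + 2)) : nullVec m j ∈ soc (m + 1) :=
  mem_soc_iff.2 ⟨by by_cases hj : j = 0 <;> simp [nullVec, hj],
    (dotProduct_Jmat_nullVec j).ge⟩

def cutMatrix (m : ℕ) : Fin (m + 3) → Matrix (Fin (m + 2)) (Fin (m + 2)) ℝ :=
  Fin.lastCases (Jmat (m + 1)) fun j => vecMulVec (cutVec m j) (cutVec m j)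

def cutWitness (m : ℕ) : Fin (m + 3) → Fin (m + 2) → ℝ :=
  Fin.lastCases (Pi.single 0 1) (nullVec m)

lemma cutMatrix_nonneg (j : Fin (m + 3)) {x : Fin (m + 2) → ℝ} (hx : x ∈ soc (m + 1)) :
    0 ≤ x ⬝ᵥ cutMatrix m j *ᵥ x := by
  induction j using Fin.lastCases with
  | last => simpa [cutMatrix] using (mem_soc_iff.1 hx).2
  | cast j =>
    simpa [cutMatrix, dotProduct_vecMulVec_mulVec] using sq_nonneg (cutVec m j ⬝ᵥ x)

lemma cutWitness_mem_soc (i : Fin (m + 3)) : cutWitness m i ∈ soc (m + 1) := by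
  induction i using Fin.lastCases with
  | last => simp [cutWitness, mem_soc_iff, Jmat]
  | cast i => simpa [cutWitness] using nullVec_mem_soc i

lemma cutWitness_cutMatrix_of_lt {i j : Fin (m + 3)} (hij : i < j) :
    cutWitness m i ⬝ᵥ cutMatrix m j *ᵥ cutWitness m i = 0 := by
  induction i using Fin.lastCases with
  | last => exact absurd hij (Fin.le_last j).not_gt
  | cast i =>
    induction j using Fin.lastCases with
    | last => simpa [cutWitness, cutMatrix] using dotProduct_Jmat_nullVec i
    | cast j =>
      simpa [cutWitness, cutMatrix, dotProduct_vecMulVec_mulVec]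
        using cutVec_dotProduct_nullVec_of_lt (Fin.castSucc_lt_castSucc_iff.1 hij)

lemma cutWitness_cutMatrix_self (i : Fin (m + 3)) :
    cutWitness m i ⬝ᵥ cutMatrix m i *ᵥ cutWitness m i ≠ 0 := by
  induction i using Fin.lastCases with
  | last => simp [cutWitness, cutMatrix, Jmat]
  | cast i => simpa [cutWitness, cutMatrix, dotProduct_vecMulVec_mulVec]
      using cutVec_dotProduct_nullVec_self i

def chainFace (m : ℕ) (i : Fin (m + 4)) : Set (Matrix (Fin (m + 2)) (Fin (m + 2)) ℝ) :=
  {A ∈ CPset (soc (m + 1)) | ∀ j : Fin (m + 3), i ≤ j.castSucc → mip (cutMatrix m j) A = 0}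

lemma isFaceOf_chainFace (i : Fin (m + 4)) : IsFaceOf (CPset (soc (m + 1))) (chainFace m i) :=
  isFaceOf_setOf_forall_eq_zero isFaceOf_CPset_soc_self (fun j => mipLinear (cutMatrix m j))
    (fun j _ hA => CPset.mip_nonneg (fun _ => cutMatrix_nonneg j) hA) _

lemma chainFace_strictMono : StrictMono (chainFace m) := by
  refine Fin.strictMono_iff_lt_succ.2 fun i => (Set.ssubset_iff_of_subset ?_).2 ?_
  · exact fun A hA => ⟨hA.1, fun j hj => hA.2 j ((Fin.castSucc_le_succ i).trans hj)⟩
  refine ⟨vecMulVec (cutWitness m i) (cutWitness m i),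
    ⟨CPset.vecMulVec_mem (cutWitness_mem_soc i), fun j hj => ?_⟩, fun hA => ?_⟩
  · rw [mip_vecMulVec]
    exact cutWitness_cutMatrix_of_lt (Fin.succ_le_castSucc_iff.1 hj)
  · exact cutWitness_cutMatrix_self i (by rw [← mip_vecMulVec]; exact hA.2 i le_rfl)

end Chain

end

/-- the length of a longest chain of faces of `CP(Lⁿ)` is `n + 2`
(here `n = m + 1 ≥ 2`, so `n + 2 = m + 3`). -/
theorem stmt15 (m : ℕ) (hm : 1 ≤ m) :
    (∃ F : Fin (m + 3) → Set (Matrix (Fin (m+1)) (Fin (m+1)) ℝ),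
        StrictMono F ∧ ∀ i, IsFaceOf (CPset (soc m)) (F i)) ∧
    (∀ (l : ℕ) (F : Fin l → Set (Matrix (Fin (m+1)) (Fin (m+1)) ℝ)),
        StrictMono F → (∀ i, IsFaceOf (CPset (soc m)) (F i)) → l ≤ m + 3) := by
  refine ⟨?_, fun l F hF hface => ?_⟩
  · obtain ⟨k, rfl⟩ := Nat.exists_eq_add_of_le' hm
    exact ⟨chainFace k, chainFace_strictMono, isFaceOf_chainFace⟩
  · have hheight : StrictMono fun i => faceHeight m (F i) :=
      fun i j hij => faceHeight_lt (hface i) (hface j) (hF hij)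
    simpa using Fintype.card_le_of_injective
      (fun i => (⟨faceHeight m (F i), Nat.lt_succ_of_le (faceHeight_le (F i))⟩ : Fin (m + 3)))
      fun i j hij => hheight.injective (Fin.mk.inj_iff.1 hij)
end

section
/- Let X be a linear subspace of ℝⁿ, let A ∈ S₊(X) be a matrix of rank r ≥ 1, and let Q be an n×n real symmetric matrix. Then there exist a₁, …, a_r ∈ X such that A = ∑_{i=1}^r aᵢaᵢᵀ and aᵢᵀQaᵢ = ⟨A, Q⟩ / r for every i = 1, …, r. -/
open Matrix
open scoped Pointwise

/-! Through the spectral decomposition, `A` is a sum of `r` rank-one terms `cᵢcᵢᵀ` whose vectors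
lie in the column space of `A`, hence in `X`. Replacing a pair `(u, v)` by
`(cos θ • u + sin θ • v, -sin θ • u + cos θ • v)` keeps `uuᵀ + vvᵀ`, and as `θ` runs over
`[0, π/2]` the value of the first vector at `Q` moves from `uᵀQu` to `vᵀQv`; so whenever the
mean `⟨A, Q⟩ / r` lies between two of the values, some rotation gives one vector exactly the mean.
Splitting that vector off leaves `r - 1` vectors whose values still average to the mean. -/

open Matrix Set

section Rotation

variable {m : Type*}

theorem vecMulVec_rotate_add_vecMulVec_rotate {R : Type*} [CommRing R] {c s : R}
    (hcs : c ^ 2 + s ^ 2 = 1) (u v : m → R) :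
    vecMulVec (c • u + s • v) (c • u + s • v) + vecMulVec (-s • u + c • v) (-s • u + c • v)
      = vecMulVec u u + vecMulVec v v := by
  ext p q
  simp only [Matrix.add_apply, vecMulVec_apply, Pi.add_apply, Pi.smul_apply, smul_eq_mul]
  linear_combination (u p * u q + v p * v q) * hcs

theorem exists_rotate_dotProduct_mulVec_eq [Fintype m] (X : Submodule ℝ (m → ℝ))
    (Q : Matrix m m ℝ) {u v : m → ℝ} (hu : u ∈ X) (hv : v ∈ X) {μ : ℝ}
    (hμ : μ ∈ uIcc (u ⬝ᵥ Q *ᵥ u) (v ⬝ᵥ Q *ᵥ v)) :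
    ∃ u' ∈ X, ∃ v' ∈ X, vecMulVec u' u' + vecMulVec v' v' = vecMulVec u u + vecMulVec v v ∧
      u' ⬝ᵥ Q *ᵥ u' = μ := by
  let rot (θ : ℝ) : m → ℝ := Real.cos θ • u + Real.sin θ • v
  have hcont : Continuous fun θ => rot θ ⬝ᵥ Q *ᵥ rot θ := by fun_prop
  obtain ⟨θ, -, hθ⟩ := intermediate_value_uIcc (a := 0) (b := Real.pi / 2) hcont.continuousOn
    (by simpa [rot] using hμ)
  exact ⟨rot θ, X.add_mem (X.smul_mem _ hu) (X.smul_mem _ hv),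
    -Real.sin θ • u + Real.cos θ • v, X.add_mem (X.smul_mem _ hu) (X.smul_mem _ hv),
    vecMulVec_rotate_add_vecMulVec_rotate (Real.cos_sq_add_sin_sq θ) u v, hθ⟩

end Rotation

theorem exists_ne_sum_div_card_mem_uIcc {ι : Type*} [Fintype ι] [Nontrivial ι] (f : ι → ℝ) :
    ∃ i j, i ≠ j ∧ (∑ t, f t) / Fintype.card ι ∈ uIcc (f i) (f j) := by
  set μ := (∑ t, f t) / Fintype.card ι
  have hsum : ∑ t, f t = ∑ _t : ι, μ := by
    have : (Fintype.card ι : ℝ) ≠ 0 := by positivity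
    simp [μ, Finset.card_univ, field]
  obtain ⟨i, -, hi⟩ := Finset.exists_le_of_sum_le Finset.univ_nonempty hsum.le
  obtain ⟨j, -, hj⟩ := Finset.exists_le_of_sum_le Finset.univ_nonempty hsum.ge
  by_cases hij : i = j
  · obtain ⟨k, hk⟩ := exists_ne i
    exact ⟨i, k, hk.symm, le_antisymm hi (hij ▸ hj) ▸ left_mem_uIcc⟩
  · exact ⟨i, j, hij, mem_uIcc.2 (Or.inl ⟨hi, hj⟩)⟩

section Frobenius

variable {n : ℕ}

theorem mip_add_left (A B Q : Matrix (Fin n) (Fin n) ℝ) : mip (A + B) Q = mip A Q + mip B Q := by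
  simp [mip, add_mul, Finset.sum_add_distrib]

theorem mip_sum_left {ι : Type*} [Fintype ι] (A : ι → Matrix (Fin n) (Fin n) ℝ)
    (Q : Matrix (Fin n) (Fin n) ℝ) : mip (∑ i, A i) Q = ∑ i, mip (A i) Q := by
  simp only [mip, Matrix.sum_apply, Finset.sum_mul]
  exact (Finset.sum_congr rfl fun _ _ => Finset.sum_comm).trans Finset.sum_comm

theorem mip_vecMulVec_self (x : Fin n → ℝ) (Q : Matrix (Fin n) (Fin n) ℝ) :
    mip (vecMulVec x x) Q = x ⬝ᵥ Q *ᵥ x := by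
  simp only [mip, vecMulVec_apply, dotProduct, mulVec, Finset.mul_sum]
  exact Finset.sum_congr rfl fun p _ => Finset.sum_congr rfl fun q _ => by ring

end Frobenius

theorem exists_equalized_sum_vecMulVec {n : ℕ} (X : Submodule ℝ (Fin n → ℝ))
    (Q : Matrix (Fin n) (Fin n) ℝ) :
    ∀ {k : ℕ} (c : Fin k → Fin n → ℝ), (∀ i, c i ∈ X) →
      ∃ a : Fin k → Fin n → ℝ, (∀ i, a i ∈ X) ∧
        ∑ i, vecMulVec (a i) (a i) = ∑ i, vecMulVec (c i) (c i) ∧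
        ∀ i, a i ⬝ᵥ Q *ᵥ a i = mip (∑ i, vecMulVec (c i) (c i)) Q / k
  | 0, c, hc => ⟨c, hc, rfl, fun i => i.elim0⟩
  | 1, c, hc => ⟨c, hc, rfl, fun i => by simp [Subsingleton.elim i 0, mip_vecMulVec_self]⟩
  | k + 2, c, hc => by
    have hmip : mip (∑ i, vecMulVec (c i) (c i)) Q = ∑ i, c i ⬝ᵥ Q *ᵥ c i := by
      simp only [mip_sum_left, mip_vecMulVec_self]
    obtain ⟨i, j, hij, hμ⟩ := exists_ne_sum_div_card_mem_uIcc fun t => c t ⬝ᵥ Q *ᵥ c t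
    rw [← hmip, Fintype.card_fin] at hμ
    obtain ⟨j, rfl⟩ := Fin.exists_succAbove_eq hij.symm
    obtain ⟨u, hu, v, hv, hrot, huμ⟩ := exists_rotate_dotProduct_mulVec_eq X Q (hc i) (hc _) hμ
    let d : Fin (k + 1) → Fin n → ℝ := Fin.cons v fun s => c (i.succAbove (j.succAbove s))
    have hgram : ∑ t, vecMulVec (c t) (c t) = vecMulVec u u + ∑ s, vecMulVec (d s) (d s) := by
      rw [Fin.sum_univ_succAbove _ i, Fin.sum_univ_succAbove _ j, Fin.sum_univ_succ, ← add_assoc,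
        ← add_assoc, ← hrot]
      simp [d, add_assoc]
    have hmip_d : mip (∑ s, vecMulVec (d s) (d s)) Q =
        (k + 1) * (mip (∑ i, vecMulVec (c i) (c i)) Q / (k + 2 : ℕ)) := by
      have := congrArg (mip · Q) hgram
      simp only [mip_add_left, mip_vecMulVec_self, huμ] at this
      push_cast at this ⊢
      field_simp at this ⊢
      linarith
    obtain ⟨a, ha, hagram, haμ⟩ := exists_equalized_sum_vecMulVec X Q d fun s =>
      Fin.cases hv (fun s => hc _) s
    refine ⟨Fin.cons u a, fun t => Fin.cases hu ha t, ?_, fun t => ?_⟩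
    · simp only [Fin.sum_univ_succ, Fin.cons_zero, Fin.cons_succ, hagram, hgram]
    · refine Fin.cases ?_ (fun s => ?_) t
      · simpa using huμ
      · simp only [Fin.cons_succ, haμ s, hmip_d]
        push_cast
        field_simp

section Decomposition

variable {ι : Type*} [Fintype ι] [DecidableEq ι]

theorem Matrix.IsHermitian.eq_sum_eigenvalues_smul_vecMulVec {A : Matrix ι ι ℝ}
    (hA : A.IsHermitian) :
    A = ∑ i, hA.eigenvalues i • vecMulVec ⇑(hA.eigenvectorBasis i) ⇑(hA.eigenvectorBasis i) := by
  conv_lhs => rw [hA.spectral_theorem]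
  ext p q
  simp only [Unitary.conjStarAlgAut_apply, Matrix.mul_apply, Matrix.sum_apply, diagonal_apply,
    Matrix.smul_apply, vecMulVec_apply, smul_eq_mul, Matrix.star_apply, star_trivial,
    IsHermitian.eigenvectorUnitary_apply, Function.comp_apply]
  refine Finset.sum_congr rfl fun t _ => ?_
  rw [Finset.sum_eq_single_of_mem t (Finset.mem_univ t) (fun b _ hb => by simp [hb])]
  simp only [if_true, RCLike.ofReal_real_eq_id, id_eq]
  ring

theorem exists_eq_sum_vecMulVec_of_posSemidef {A : Matrix ι ι ℝ} (hA : A.PosSemidef)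
    (X : Submodule ℝ (ι → ℝ)) (hAX : ∀ x, A *ᵥ x ∈ X) :
    ∃ c : Fin A.rank → ι → ℝ, (∀ i, c i ∈ X) ∧ A = ∑ i, vecMulVec (c i) (c i) := by
  set ev := hA.isHermitian.eigenvalues
  set e := hA.isHermitian.eigenvectorBasis
  have hmem : ∀ i, ev i ≠ 0 → ⇑(e i) ∈ X := fun i hi => by
    have : ⇑(e i) = (ev i)⁻¹ • A *ᵥ ⇑(e i) := by
      rw [hA.isHermitian.mulVec_eigenvectorBasis, smul_smul, inv_mul_cancel₀ hi, one_smul]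
    exact this ▸ X.smul_mem _ (hAX _)
  let σ := Fintype.equivFinOfCardEq hA.isHermitian.rank_eq_card_non_zero_eigs.symm
  refine ⟨fun t => √(ev (σ.symm t)) • ⇑(e (σ.symm t)),
    fun t => X.smul_mem _ (hmem _ (σ.symm t).2), ?_⟩
  calc A = ∑ i, ev i • vecMulVec ⇑(e i) ⇑(e i) := hA.isHermitian.eq_sum_eigenvalues_smul_vecMulVec
    _ = ∑ i ∈ Finset.univ.filter (ev · ≠ 0), ev i • vecMulVec ⇑(e i) ⇑(e i) :=
      (Finset.sum_filter_of_ne (p := (ev · ≠ 0)) fun i _ hi h => hi (by rw [h, zero_smul])).symm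
    _ = ∑ i : {i // ev i ≠ 0}, ev i • vecMulVec ⇑(e i) ⇑(e i) := Finset.sum_subtype _ (by simp) _
    _ = _ := by
      rw [← σ.symm.sum_comp]
      refine Finset.sum_congr rfl fun t _ => ?_
      rw [smul_vecMulVec, vecMulVec_smul, smul_smul, Real.mul_self_sqrt (hA.eigenvalues_nonneg _)]

end Decomposition

section CPset

variable {n : ℕ} {A : Matrix (Fin n) (Fin n) ℝ}

theorem posSemidef_of_mem_CPset {S : Set (Fin n → ℝ)} (hA : A ∈ CPset S) : A.PosSemidef := by
  obtain ⟨k, -, b, -, rfl⟩ := hA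
  exact posSemidef_sum _ fun i _ => by simpa using posSemidef_vecMulVec_self_star (b i)

theorem mulVec_mem_of_mem_CPset {X : Submodule ℝ (Fin n → ℝ)} (hA : A ∈ CPset (X : Set _))
    (x : Fin n → ℝ) : A *ᵥ x ∈ X := by
  obtain ⟨k, -, b, hb, rfl⟩ := hA
  rw [sum_mulVec]
  exact X.sum_mem fun i _ => by simpa [vecMulVec_mulVec] using X.smul_mem _ (hb i)

end CPset

theorem stmt19_general (n : ℕ) (X : Submodule ℝ (Fin n → ℝ))
    (A : Matrix (Fin n) (Fin n) ℝ) (hA : A ∈ CPset (X : Set (Fin n → ℝ)))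
    (r : ℕ) (hr : A.rank = r)
    (Q : Matrix (Fin n) (Fin n) ℝ) :
    ∃ a : Fin r → (Fin n → ℝ), (∀ i, a i ∈ X) ∧
      A = ∑ i, Matrix.vecMulVec (a i) (a i) ∧
      ∀ i, (a i) ⬝ᵥ Q.mulVec (a i) = mip A Q / r := by
  subst hr
  obtain ⟨c, hcX, hAc⟩ := exists_eq_sum_vecMulVec_of_posSemidef (posSemidef_of_mem_CPset hA) X
    (mulVec_mem_of_mem_CPset hA)
  obtain ⟨a, haX, hac, haQ⟩ := exists_equalized_sum_vecMulVec X Q c hcX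
  exact ⟨a, haX, hAc.trans hac.symm, fun i => (haQ i).trans (by rw [← hAc])⟩

/-- rank-`r` matrices in `S₊(X)` admit a rank-one decomposition of
length `r` with equal `Q`-values. -/
theorem stmt19 (n : ℕ) (X : Submodule ℝ (Fin n → ℝ))
    (A : Matrix (Fin n) (Fin n) ℝ) (hA : A ∈ CPset (X : Set (Fin n → ℝ)))
    (r : ℕ) (hr1 : 1 ≤ r) (hr : A.rank = r)
    (Q : Matrix (Fin n) (Fin n) ℝ) (hQ : Q.IsSymm) :
    ∃ a : Fin r → (Fin n → ℝ), (∀ i, a i ∈ X) ∧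
      A = ∑ i, Matrix.vecMulVec (a i) (a i) ∧
      ∀ i, (a i) ⬝ᵥ Q.mulVec (a i) = mip A Q / r :=
  stmt19_general n X A hA r hr Q
end
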